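/- Let f ∈ C_B[0,∞), and let a_0(n), a_1(n) be convergent real sequences satisfying 2a_0(n) − a_1(n) = 1 for all n. Assume moreover that the operators V_{n,1} are positive, i.e. p^1_{n,k}(x) ≥ 0 for all n, all k ≥ 0 and all x ≥ 0. Then for every compact subset A ⊂ [0,∞), the functions x ↦ V_{n,1}(f; x) converge uniformly to f on A as n → ∞. -/

import Mathlib

open MeasureTheory Filter Topology

/-- Baskakov basis function `p_{n,k}(x) = C(n+k-1, k) x^k / (1+x)^{n+k}`. -/
noncomputable def bask (n k : ℕ) (x : ℝ) : ℝ :=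
  (Nat.choose (n + k - 1) k : ℝ) * x ^ k / (1 + x) ^ (n + k)

/-- Modified basis `p^1_{n,k}(x) = a(x,n) p_{n+1,k}(x) + b(x,n) p_{n+1,k-1}(x)`,
with `p_{n+1,-1} = 0`. -/
noncomputable def p1 (a0 a1 : ℕ → ℝ) (n k : ℕ) (x : ℝ) : ℝ :=
  (a0 n + a1 n * x) * bask (n + 1) k x
    + (a0 n - a1 n * (1 + x)) * (if k = 0 then 0 else bask (n + 1) (k - 1) x)

/-- First-order modified Baskakov–Durrmeyer operator. -/
noncomputable def V1 (a0 a1 : ℕ → ℝ) (n : ℕ) (f : ℝ → ℝ) (x : ℝ) : ℝ :=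
  ((n : ℝ) - 1) * ∑' k : ℕ, p1 a0 a1 n k x * ∫ t in Set.Ioi (0 : ℝ), bask n k t * f t

/-!
`V_{n,1}` is a positive operator that reproduces constants: `∑ₖ p^1_{n,k}(x) = 1` because
`2a₀(n) - a₁(n) = 1`, and `(n - 1) ∫ p_{n,k} = 1`. The Beta integrals
`∫₀^∞ t^k / (1+t)^(k+d+2) dt = k! d! / (k+d+1)!` and the factorial moments of the Baskakov basis
give its second central moment `V_{n,1}((· - x)²; x)` in closed form; it is `O(1/n)` uniformly
for `x` in a compact set. Since `|f t - f x| ≤ ε + c (t - x)²` there (uniform continuity near `x`,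
boundedness far from it), positivity yields `|V_{n,1}(f; x) - f x| ≤ ε + c · O(1/n)`.
-/

open Set

lemma hasDerivAt_inv_one_add_pow (q : ℕ) {t : ℝ} (ht : 1 + t ≠ 0) :
    HasDerivAt (fun s : ℝ => ((1 + s) ^ (q + 1))⁻¹)
      (-((q : ℝ) + 1) * ((1 + t) ^ (q + 2))⁻¹) t := by
  have h : HasDerivAt (fun s : ℝ => (1 + s) ^ (q + 1)) (((q : ℝ) + 1) * (1 + t) ^ q) t := by
    simpa using ((hasDerivAt_id t).const_add 1).fun_pow (q + 1)
  exact (h.inv (pow_ne_zero _ ht)).congr_deriv (by field_simp; ring)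

lemma hasDerivAt_antideriv_inv_one_add_pow (d : ℕ) {t : ℝ} (ht : 0 ≤ t) :
    HasDerivAt (fun s : ℝ => -((d : ℝ) + 1)⁻¹ * ((1 + s) ^ (d + 1))⁻¹)
      ((1 + t) ^ (d + 2))⁻¹ t :=
  ((hasDerivAt_inv_one_add_pow d (by positivity)).const_mul _).congr_deriv (by field_simp)

lemma tendsto_inv_one_add_pow_atTop {q : ℕ} (hq : q ≠ 0) :
    Tendsto (fun s : ℝ => ((1 + s) ^ q)⁻¹) atTop (𝓝 0) :=
  ((tendsto_pow_atTop hq).comp (tendsto_atTop_add_const_left _ 1 tendsto_id)).inv_tendsto_atTop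

lemma tendsto_antideriv_inv_one_add_pow (d : ℕ) :
    Tendsto (fun s : ℝ => -((d : ℝ) + 1)⁻¹ * ((1 + s) ^ (d + 1))⁻¹) atTop (𝓝 0) := by
  simpa using (tendsto_inv_one_add_pow_atTop d.succ_ne_zero).const_mul (-((d : ℝ) + 1)⁻¹)

lemma integrableOn_inv_one_add_pow (d : ℕ) :
    IntegrableOn (fun t : ℝ => ((1 + t) ^ (d + 2))⁻¹) (Ioi 0) :=
  integrableOn_Ioi_deriv_of_nonneg' (fun _ ht => hasDerivAt_antideriv_inv_one_add_pow d ht)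
    (fun t (ht : 0 < t) => by positivity) (tendsto_antideriv_inv_one_add_pow d)

lemma integral_inv_one_add_pow (d : ℕ) :
    ∫ t in Ioi (0 : ℝ), ((1 + t) ^ (d + 2))⁻¹ = ((d : ℝ) + 1)⁻¹ := by
  rw [integral_Ioi_of_hasDerivAt_of_tendsto'
    (fun _ ht => hasDerivAt_antideriv_inv_one_add_pow d ht) (integrableOn_inv_one_add_pow d)
    (tendsto_antideriv_inv_one_add_pow d)]
  simp

lemma pow_div_one_add_pow_le {t : ℝ} (ht : 0 ≤ t) (k d : ℕ) :
    t ^ k / (1 + t) ^ (k + d) ≤ ((1 + t) ^ d)⁻¹ := by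
  rw [pow_add, ← div_div, ← div_pow, div_eq_mul_inv _ ((1 + t) ^ d)]
  exact mul_le_of_le_one_left (by positivity)
    (pow_le_one₀ (by positivity) ((div_le_one (by positivity)).2 (by linarith)))

lemma integrableOn_pow_div_one_add_pow (k d : ℕ) :
    IntegrableOn (fun t : ℝ => t ^ k / (1 + t) ^ (k + d + 2)) (Ioi 0) := by
  refine (integrableOn_inv_one_add_pow d).mono' ?_ ?_
  · exact (ContinuousOn.div (continuousOn_pow k) (by fun_prop)
      fun t (ht : 0 < t) => by positivity).aestronglyMeasurable measurableSet_Ioi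
  · refine (ae_restrict_iff' measurableSet_Ioi).2 (ae_of_all _ fun t (ht : 0 < t) => ?_)
    rw [Real.norm_of_nonneg (by positivity), add_assoc]
    exact pow_div_one_add_pow_le ht.le k (d + 2)

lemma integral_pow_succ_div_one_add_pow (k d : ℕ) :
    ((k : ℝ) + d + 2) * ∫ t in Ioi (0 : ℝ), t ^ (k + 1) / (1 + t) ^ (k + 1 + d + 2)
      = ((k : ℝ) + 1) * ∫ t in Ioi (0 : ℝ), t ^ k / (1 + t) ^ (k + d + 2) := by
  -- Integration by parts: `F` vanishes at `0` and at `∞`.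
  set F : ℝ → ℝ := fun s => s ^ (k + 1) / (1 + s) ^ (k + d + 2)
  have hF : ∀ t ∈ Ici (0 : ℝ), HasDerivAt F (((k : ℝ) + 1) * (t ^ k / (1 + t) ^ (k + d + 2))
      - ((k : ℝ) + d + 2) * (t ^ (k + 1) / (1 + t) ^ (k + 1 + d + 2))) t := by
    intro t (ht : 0 ≤ t)
    have h := (hasDerivAt_pow (k + 1) t).mul
      (hasDerivAt_inv_one_add_pow (k + d + 1) (by positivity : 1 + t ≠ 0))
    simp only [div_eq_mul_inv]
    refine h.congr_deriv ?_
    rw [show k + 1 + d + 2 = k + d + 1 + 2 by ring]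
    push_cast
    ring
  have hF_top : Tendsto F atTop (𝓝 0) := by
    refine squeeze_zero' ?_ ?_ (tendsto_inv_one_add_pow_atTop (d.succ_ne_zero))
    · filter_upwards [eventually_ge_atTop 0] with t ht using by positivity
    · filter_upwards [eventually_ge_atTop 0] with t ht
      simpa [F, show k + d + 2 = k + 1 + (d + 1) by ring]
        using pow_div_one_add_pow_le ht (k + 1) (d + 1)
  have h := integral_Ioi_of_hasDerivAt_of_tendsto' hF
    (((integrableOn_pow_div_one_add_pow k d).const_mul _).sub
      ((integrableOn_pow_div_one_add_pow (k + 1) d).const_mul _)) hF_top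
  rw [integral_sub ((integrableOn_pow_div_one_add_pow k d).const_mul _)
    ((integrableOn_pow_div_one_add_pow (k + 1) d).const_mul _), integral_const_mul,
    integral_const_mul] at h
  simp only [F, zero_pow k.succ_ne_zero, zero_div, sub_zero] at h
  linarith

lemma integral_pow_div_one_add_pow (k d : ℕ) :
    ∫ t in Ioi (0 : ℝ), t ^ k / (1 + t) ^ (k + d + 2)
      = (k.factorial * d.factorial : ℝ) / (k + d + 1).factorial := by
  induction k with
  | zero =>
    simp only [pow_zero, zero_add, one_div, integral_inv_one_add_pow, Nat.factorial_zero]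
    rw [Nat.factorial_succ]
    push_cast
    field_simp
  | succ k ih =>
    rw [← mul_right_inj' (by positivity : (k : ℝ) + d + 2 ≠ 0),
      integral_pow_succ_div_one_add_pow k d, ih, show k + 1 + d + 1 = (k + d + 1) + 1 by ring,
      Nat.factorial_succ (k + d + 1), Nat.factorial_succ k]
    push_cast
    field_simp
    ring

lemma bask_nonneg (n k : ℕ) {t : ℝ} (ht : 0 ≤ t) : 0 ≤ bask n k t := by
  unfold bask; positivity

lemma bask_mul_pow (j d k : ℕ) (t : ℝ) :
    bask (j + d + 2) k t * t ^ j
      = ((k + (j + d + 1)).choose k : ℝ) * (t ^ (k + j) / (1 + t) ^ (k + j + d + 2)) := by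
  rw [bask, show j + d + 2 + k - 1 = k + (j + d + 1) by omega,
    show k + j + d + 2 = j + d + 2 + k by ring, pow_add]
  ring

lemma integrableOn_bask_mul_pow {n j : ℕ} (h : j + 2 ≤ n) (k : ℕ) :
    IntegrableOn (fun t => bask n k t * t ^ j) (Ioi 0) := by
  obtain ⟨d, rfl⟩ : ∃ d, n = j + d + 2 := ⟨n - j - 2, by omega⟩
  exact IntegrableOn.congr_fun ((integrableOn_pow_div_one_add_pow (k + j) d).const_mul _)
    (fun t _ => (bask_mul_pow j d k t).symm) measurableSet_Ioi

lemma integral_bask_mul_pow (j d k : ℕ) :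
    ∫ t in Ioi (0 : ℝ), bask (j + d + 2) k t * t ^ j
      = ((k + j).factorial * d.factorial : ℝ) / (k.factorial * (j + d + 1).factorial) := by
  simp only [bask_mul_pow]
  rw [integral_const_mul, integral_pow_div_one_add_pow, Nat.cast_add_choose,
    show k + j + d + 1 = k + (j + d + 1) by ring]
  field_simp

lemma integral_bask {n : ℕ} (hn : 2 ≤ n) (k : ℕ) :
    ∫ t in Ioi (0 : ℝ), bask n k t = 1 / ((n : ℝ) - 1) := by
  obtain ⟨d, rfl⟩ : ∃ d, n = 0 + d + 2 := ⟨n - 2, by omega⟩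
  have h := integral_bask_mul_pow 0 d k
  simp only [pow_zero, mul_one, add_zero] at h
  rw [h, zero_add, Nat.factorial_succ,
    show ((d + 2 : ℕ) : ℝ) - 1 = d + 1 by push_cast; ring]
  push_cast
  field_simp

lemma integral_bask_mul_self {n : ℕ} (hn : 3 ≤ n) (k : ℕ) :
    ∫ t in Ioi (0 : ℝ), bask n k t * t
      = ((k : ℝ) + 1) / (((n : ℝ) - 1) * ((n : ℝ) - 2)) := by
  obtain ⟨d, rfl⟩ : ∃ d, n = 1 + d + 2 := ⟨n - 3, by omega⟩
  have h := integral_bask_mul_pow 1 d k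
  simp only [pow_one] at h
  rw [h, show 1 + d + 1 = d + 1 + 1 by ring, Nat.factorial_succ (d + 1), Nat.factorial_succ d,
    Nat.factorial_succ k, show ((1 + d + 2 : ℕ) : ℝ) - 1 = d + 2 by push_cast; ring,
    show ((1 + d + 2 : ℕ) : ℝ) - 2 = d + 1 by push_cast; ring]
  push_cast
  field_simp
  ring

lemma integral_bask_mul_sq {n : ℕ} (hn : 4 ≤ n) (k : ℕ) :
    ∫ t in Ioi (0 : ℝ), bask n k t * t ^ 2
      = ((k : ℝ) + 1) * ((k : ℝ) + 2) / (((n : ℝ) - 1) * ((n : ℝ) - 2) * ((n : ℝ) - 3)) := by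
  obtain ⟨d, rfl⟩ : ∃ d, n = 2 + d + 2 := ⟨n - 4, by omega⟩
  rw [integral_bask_mul_pow, show 2 + d + 1 = d + 2 + 1 by ring, Nat.factorial_succ (d + 2),
    Nat.factorial_succ (d + 1), Nat.factorial_succ d, show k + 2 = k + 1 + 1 by ring,
    Nat.factorial_succ (k + 1), Nat.factorial_succ k,
    show ((2 + d + 2 : ℕ) : ℝ) - 1 = d + 3 by push_cast; ring,
    show ((2 + d + 2 : ℕ) : ℝ) - 2 = d + 2 by push_cast; ring,
    show ((2 + d + 2 : ℕ) : ℝ) - 3 = d + 1 by push_cast; ring]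
  push_cast
  field_simp
  ring

lemma integrableOn_bask {n : ℕ} (hn : 2 ≤ n) (k : ℕ) :
    IntegrableOn (fun t => bask n k t) (Ioi 0) := by
  simpa using integrableOn_bask_mul_pow (j := 0) hn k

lemma integrableOn_bask_mul_self {n : ℕ} (hn : 3 ≤ n) (k : ℕ) :
    IntegrableOn (fun t => bask n k t * t) (Ioi 0) := by
  simpa using integrableOn_bask_mul_pow (j := 1) hn k

lemma bask_mul_sub_sq (n k : ℕ) (x t : ℝ) : bask n k t * (t - x) ^ 2
    = bask n k t * t ^ 2 - 2 * x * (bask n k t * t) + x ^ 2 * bask n k t := by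
  ring

lemma integrableOn_bask_mul_sub_sq {n : ℕ} (hn : 4 ≤ n) (k : ℕ) (x : ℝ) :
    IntegrableOn (fun t => bask n k t * (t - x) ^ 2) (Ioi 0) := by
  simp only [bask_mul_sub_sq]
  exact ((integrableOn_bask_mul_pow hn k).sub
    ((integrableOn_bask_mul_self (by omega) k).const_mul _)).add
    ((integrableOn_bask (by omega) k).const_mul _)

lemma integral_bask_mul_sub_sq {n : ℕ} (hn : 4 ≤ n) (k : ℕ) (x : ℝ) :
    ((n : ℝ) - 1) * ∫ t in Ioi (0 : ℝ), bask n k t * (t - x) ^ 2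
      = x ^ 2 - 2 * x * ((k : ℝ) + 1) / ((n : ℝ) - 2)
        + ((k : ℝ) + 1) * ((k : ℝ) + 2) / (((n : ℝ) - 2) * ((n : ℝ) - 3)) := by
  have h2 := integrableOn_bask_mul_pow (j := 2) hn k
  have h1 := (integrableOn_bask_mul_self (n := n) (by omega) k).const_mul (2 * x)
  have h21 : IntegrableOn (fun t => bask n k t * t ^ 2 - 2 * x * (bask n k t * t)) (Ioi 0) :=
    h2.sub h1
  simp only [bask_mul_sub_sq]
  rw [integral_add h21 ((integrableOn_bask (by omega) k).const_mul _), integral_sub h2 h1,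
    integral_const_mul, integral_const_mul, integral_bask_mul_sq hn,
    integral_bask_mul_self (by omega), integral_bask (by omega)]
  have hn4 : (4 : ℝ) ≤ n := by exact_mod_cast hn
  have hn1 : (n : ℝ) - 1 ≠ 0 := by linarith
  have hn2 : (n : ℝ) - 2 ≠ 0 := by linarith
  have hn3 : (n : ℝ) - 3 ≠ 0 := by linarith
  field_simp
  ring

lemma hasSum_bask (n : ℕ) {x : ℝ} (hx : 0 ≤ x) : HasSum (fun k => bask (n + 1) k x) 1 := by
  have hr : ‖x / (1 + x)‖ < 1 := by
    rw [Real.norm_of_nonneg (by positivity), div_lt_one (by positivity)]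
    linarith
  have h := (hasSum_choose_mul_geometric_of_norm_lt_one n hr).mul_right ((1 + x) ^ (n + 1))⁻¹
  have h1 : (1 : ℝ) - x / (1 + x) = (1 + x)⁻¹ := by field_simp; ring
  rw [h1, inv_pow, one_div, inv_inv, mul_inv_cancel₀ (by positivity)] at h
  refine h.congr_fun fun k => ?_
  rw [bask, show n + 1 + k - 1 = k + n by omega, Nat.choose_symm_add, div_pow,
    show n + 1 + k = k + (n + 1) by ring, pow_add]
  field_simp

lemma succ_mul_bask_succ (m k : ℕ) (x : ℝ) :
    ((k : ℝ) + 1) * bask m (k + 1) x = m * x * bask (m + 1) k x := by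
  have h := Nat.choose_succ_right_eq (m + k) k
  rw [Nat.add_sub_cancel] at h
  have h' : ((m + k).choose (k + 1) : ℝ) * (k + 1) = (m + k).choose k * m := by exact_mod_cast h
  rw [bask, bask, show m + (k + 1) - 1 = m + k by omega, show m + 1 + k - 1 = m + k by omega,
    show m + 1 + k = m + (k + 1) by ring]
  linear_combination x ^ (k + 1) / (1 + x) ^ (m + (k + 1)) * h'

lemma hasSum_of_hasSum_succ {f : ℕ → ℝ} {a : ℝ} (h : HasSum (fun k => f (k + 1)) a)
    (h0 : f 0 = 0) : HasSum f a := by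
  simpa [h0] using (hasSum_nat_add_iff 1).mp h

lemma hasSum_nat_mul_bask (n : ℕ) {x : ℝ} (hx : 0 ≤ x) :
    HasSum (fun k : ℕ => (k : ℝ) * bask (n + 1) k x) (((n : ℝ) + 1) * x) := by
  refine hasSum_of_hasSum_succ ?_ (by simp)
  have h := (hasSum_bask (n + 1) hx).mul_left (((n : ℝ) + 1) * x)
  rw [mul_one] at h
  refine h.congr_fun fun k => ?_
  push_cast
  rw [succ_mul_bask_succ]
  push_cast
  ring

lemma hasSum_nat_mul_pred_mul_bask (n : ℕ) {x : ℝ} (hx : 0 ≤ x) :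
    HasSum (fun k : ℕ => (k : ℝ) * ((k : ℝ) - 1) * bask (n + 1) k x)
      (((n : ℝ) + 1) * ((n : ℝ) + 2) * x ^ 2) := by
  refine hasSum_of_hasSum_succ ?_ (by simp)
  have h := (hasSum_nat_mul_bask (n + 1) hx).mul_left (((n : ℝ) + 1) * x)
  rw [show ((n : ℝ) + 1) * x * ((((n + 1 : ℕ) : ℝ) + 1) * x)
    = ((n : ℝ) + 1) * ((n : ℝ) + 2) * x ^ 2 by push_cast; ring] at h
  refine h.congr_fun fun k => ?_
  push_cast
  rw [add_sub_cancel_right, mul_comm _ (k : ℝ), mul_assoc, succ_mul_bask_succ]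
  push_cast
  ring

lemma hasSum_bask_mul_quadratic (n : ℕ) {x : ℝ} (hx : 0 ≤ x) (A B C : ℝ) :
    HasSum (fun k : ℕ => bask (n + 1) k x * (A + B * k + C * (k * ((k : ℝ) - 1))))
      (A + B * (((n : ℝ) + 1) * x) + C * (((n : ℝ) + 1) * ((n : ℝ) + 2) * x ^ 2)) := by
  have h := (((hasSum_bask n hx).mul_left A).add ((hasSum_nat_mul_bask n hx).mul_left B)).add
    ((hasSum_nat_mul_pred_mul_bask n hx).mul_left C)
  rw [mul_one] at h
  exact h.congr_fun fun k => by ring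

lemma hasSum_p1_mul {a0 a1 : ℕ → ℝ} {n : ℕ} {x : ℝ} {g : ℕ → ℝ} {S T : ℝ}
    (hS : HasSum (fun k => bask (n + 1) k x * g k) S)
    (hT : HasSum (fun k => bask (n + 1) k x * g (k + 1)) T) :
    HasSum (fun k => p1 a0 a1 n k x * g k)
      ((a0 n + a1 n * x) * S + (a0 n - a1 n * (1 + x)) * T) := by
  have hT' : HasSum (fun k => (if k = 0 then 0 else bask (n + 1) (k - 1) x) * g k) T :=
    hasSum_of_hasSum_succ (by simpa using hT) (by simp)
  exact ((hS.mul_left _).add (hT'.mul_left _)).congr_fun fun k => by rw [p1]; ring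

lemma hasSum_p1 {a0 a1 : ℕ → ℝ} {n : ℕ} {x : ℝ} (hx : 0 ≤ x) (hrel : 2 * a0 n - a1 n = 1) :
    HasSum (fun k => p1 a0 a1 n k x) 1 := by
  have h := hasSum_p1_mul (a0 := a0) (a1 := a1) (g := fun _ => 1)
    (by simpa using hasSum_bask n hx) (by simpa using hasSum_bask n hx)
  rw [show (a0 n + a1 n * x) * 1 + (a0 n - a1 n * (1 + x)) * 1 = 1 by
    linear_combination hrel] at h
  simpa using h

/-- `V_{n,1}((· - x)²; x)`, valid for `n ≥ 4`. -/
noncomputable def V1SecondMoment (a0 a1 : ℕ → ℝ) (n : ℕ) (x : ℝ) : ℝ :=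
  ((2 * n + 14) * x ^ 2 + (2 * n + 10 + 8 * (a0 n - a1 n * (1 + x))) * x
    + 4 * (a0 n - a1 n * (1 + x)) + 2) / (((n : ℝ) - 2) * ((n : ℝ) - 3))

lemma hasSum_p1_mul_integral_bask_mul_sub_sq {a0 a1 : ℕ → ℝ} {n : ℕ} (hn : 4 ≤ n) {x : ℝ}
    (hx : 0 ≤ x) (hrel : 2 * a0 n - a1 n = 1) :
    HasSum (fun k => p1 a0 a1 n k x
        * (((n : ℝ) - 1) * ∫ t in Ioi (0 : ℝ), bask n k t * (t - x) ^ 2))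
      (V1SecondMoment a0 a1 n x) := by
  have hn4 : (4 : ℝ) ≤ n := by exact_mod_cast hn
  have hn2 : (n : ℝ) - 2 ≠ 0 := by linarith
  have hn3 : (n : ℝ) - 3 ≠ 0 := by linarith
  set D := ((n : ℝ) - 2) * ((n : ℝ) - 3)
  simp only [integral_bask_mul_sub_sq hn]
  set g : ℕ → ℝ :=
    fun k => x ^ 2 - 2 * x * ((k : ℝ) + 1) / ((n : ℝ) - 2) + ((k : ℝ) + 1) * ((k : ℝ) + 2) / D
  -- `g k` and `g (k + 1)` in the basis `1, k, k (k - 1)`, via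
  -- `(k + 1) (k + 2) = k (k - 1) + 4 k + 2` and `(k + 2) (k + 3) = k (k - 1) + 6 k + 6`.
  have hS := hasSum_bask_mul_quadratic n hx (x ^ 2 - 2 * x / ((n : ℝ) - 2) + 2 / D)
      (-2 * x / ((n : ℝ) - 2) + 4 / D) (1 / D)
  have hT := hasSum_bask_mul_quadratic n hx (x ^ 2 - 4 * x / ((n : ℝ) - 2) + 6 / D)
      (-2 * x / ((n : ℝ) - 2) + 6 / D) (1 / D)
  have h := hasSum_p1_mul (a0 := a0) (a1 := a1) (g := g)
    (hS.congr_fun fun k => by simp only [g]; field_simp; ring)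
    (hT.congr_fun fun k => by simp only [g]; push_cast; field_simp; ring)
  convert h using 1
  rw [V1SecondMoment, show a1 n = 2 * a0 n - 1 by linarith]
  simp only [D]
  field_simp
  ring

lemma abs_integral_mul_sub_le {α : Type*} [MeasurableSpace α] {μ : Measure α} {ρ f g : α → ℝ}
    {y ε c : ℝ} (hρ : 0 ≤ᵐ[μ] ρ) (hρ1 : ∫ t, ρ t ∂μ = 1) (hf : AEStronglyMeasurable f μ)
    (hg : Integrable (fun t => ρ t * g t) μ) (hfg : ∀ᵐ t ∂μ, |f t - y| ≤ ε + c * g t) :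
    |∫ t, ρ t * f t ∂μ - y| ≤ ε + c * ∫ t, ρ t * g t ∂μ := by
  have hρi : Integrable ρ μ := Integrable.of_integral_ne_zero (by rw [hρ1]; exact one_ne_zero)
  have hmaj : Integrable (fun t => ε * ρ t + c * (ρ t * g t)) μ :=
    (hρi.const_mul ε).add (hg.const_mul c)
  have hbound : ∀ᵐ t ∂μ, |ρ t * (f t - y)| ≤ ε * ρ t + c * (ρ t * g t) := by
    filter_upwards [hρ, hfg] with t (hρt : 0 ≤ ρ t) hft
    rw [abs_mul, abs_of_nonneg hρt]
    linarith [mul_le_mul_of_nonneg_left hft hρt]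
  have hdiff : Integrable (fun t => ρ t * (f t - y)) μ :=
    hmaj.mono' (hρi.aestronglyMeasurable.mul (hf.sub aestronglyMeasurable_const)) hbound
  have hsplit : ∫ t, ρ t * f t ∂μ = ∫ t, ρ t * (f t - y) ∂μ + y := by
    have := integral_add hdiff (hρi.const_mul y)
    simp only [integral_const_mul, hρ1, mul_one] at this
    rw [← this]
    congr 1 with t
    ring
  calc |∫ t, ρ t * f t ∂μ - y| = |∫ t, ρ t * (f t - y) ∂μ| := by
        rw [hsplit, add_sub_cancel_right]
    _ ≤ ∫ t, |ρ t * (f t - y)| ∂μ := abs_integral_le_integral_abs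
    _ ≤ ∫ t, (ε * ρ t + c * (ρ t * g t)) ∂μ := integral_mono_ae hdiff.abs hmaj hbound
    _ = ε + c * ∫ t, ρ t * g t ∂μ := by
      rw [integral_add (hρi.const_mul ε) (hg.const_mul c), integral_const_mul,
        integral_const_mul, hρ1, mul_one]

lemma abs_tsum_mul_sub_le {ι : Type*} {w v q : ι → ℝ} {y ε c E : ℝ} (hw : ∀ k, 0 ≤ w k)
    (hw1 : HasSum w 1) (hq : HasSum (fun k => w k * q k) E)
    (hv : ∀ k, |v k - y| ≤ ε + c * q k) :
    |∑' k, w k * v k - y| ≤ ε + c * E := by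
  have hmaj : HasSum (fun k => ε * w k + c * (w k * q k)) (ε + c * E) := by
    simpa using (hw1.mul_left ε).add (hq.mul_left c)
  have hbound : ∀ k, ‖w k * (v k - y)‖ ≤ ε * w k + c * (w k * q k) := fun k => by
    rw [Real.norm_eq_abs, abs_mul, abs_of_nonneg (hw k)]
    linarith [mul_le_mul_of_nonneg_left (hv k) (hw k)]
  have hsum : Summable (fun k => w k * (v k - y)) := hmaj.summable.of_norm_bounded hbound
  have hsplit : ∑' k, w k * v k = ∑' k, w k * (v k - y) + y := by
    nth_rewrite 2 [← one_mul y]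
    rw [← (hw1.mul_right y).tsum_eq, ← hsum.tsum_add (hw1.summable.mul_right _)]
    congr 1 with k
    ring
  rw [hsplit, add_sub_cancel_right, ← Real.norm_eq_abs]
  exact tsum_of_norm_bounded hmaj hbound

lemma abs_V1_sub_le {a0 a1 : ℕ → ℝ} {n : ℕ} (hn : 4 ≤ n) {x : ℝ} (hx : 0 ≤ x)
    (hrel : 2 * a0 n - a1 n = 1) (hpos : ∀ k, 0 ≤ p1 a0 a1 n k x) {f : ℝ → ℝ} {ε c : ℝ}
    (hf : AEStronglyMeasurable f (volume.restrict (Ioi 0)))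
    (hfx : ∀ t ∈ Ioi (0 : ℝ), |f t - f x| ≤ ε + c * (t - x) ^ 2) :
    |V1 a0 a1 n f x - f x| ≤ ε + c * V1SecondMoment a0 a1 n x := by
  have hn1 : (1 : ℝ) < n := by exact_mod_cast (by omega : 1 < n)
  have hV : V1 a0 a1 n f x
      = ∑' k, p1 a0 a1 n k x * (((n : ℝ) - 1) * ∫ t in Ioi 0, bask n k t * f t) := by
    rw [V1, ← tsum_mul_left]
    congr 1 with k
    ring
  rw [hV]
  refine abs_tsum_mul_sub_le hpos (hasSum_p1 hx hrel)
    (hasSum_p1_mul_integral_bask_mul_sub_sq hn hx hrel) fun k => ?_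
  have hρ : ∀ᵐ t ∂(volume.restrict (Ioi 0)), 0 ≤ ((n : ℝ) - 1) * bask n k t :=
    (ae_restrict_iff' measurableSet_Ioi).2 (ae_of_all _ fun t (ht : 0 < t) =>
      mul_nonneg (by linarith) (bask_nonneg n k ht.le))
  have hρ1 : ∫ t in Ioi 0, ((n : ℝ) - 1) * bask n k t = 1 := by
    rw [integral_const_mul, integral_bask (by omega), mul_one_div_cancel (by linarith)]
  have h := abs_integral_mul_sub_le (ρ := fun t => ((n : ℝ) - 1) * bask n k t)
    (g := fun t => (t - x) ^ 2) hρ hρ1 hf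
    (by simpa only [mul_assoc]
      using (integrableOn_bask_mul_sub_sq hn k x).const_mul ((n : ℝ) - 1))
    ((ae_restrict_iff' measurableSet_Ioi).2 (ae_of_all _ hfx))
  simpa only [mul_assoc, integral_const_mul] using h

lemma exists_abs_sub_le_add_mul_sq {f : ℝ → ℝ} {M : ℝ} (hf : ContinuousOn f (Ici 0))
    (hM : ∀ t ∈ Ici (0 : ℝ), |f t| ≤ M) (C : ℝ) {ε : ℝ} (hε : 0 < ε) :
    ∃ c, 0 ≤ c ∧ ∀ x ∈ Icc 0 C, ∀ t ∈ Ici (0 : ℝ), |f t - f x| ≤ ε + c * (t - x) ^ 2 := by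
  obtain ⟨δ, hδ, hfδ⟩ := Metric.uniformContinuousOn_iff.mp
    ((isCompact_Icc (a := 0) (b := C + 1)).uniformContinuousOn_of_continuous
      (hf.mono Icc_subset_Ici_self)) ε hε
  have hM0 : 0 ≤ M := (abs_nonneg _).trans (hM 0 self_mem_Ici)
  set δ' := min δ 1
  have hδ' : 0 < δ' := lt_min hδ one_pos
  refine ⟨2 * M / δ' ^ 2, by positivity, fun x hx t (ht : 0 ≤ t) => ?_⟩
  rcases lt_or_ge |t - x| δ' with hnear | hfar
  · have htC : t ≤ C + 1 := by
      linarith [(abs_lt.1 hnear).2, min_le_right δ 1, hx.2]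
    have h := hfδ t ⟨ht, htC⟩ x ⟨hx.1, by linarith [hx.2]⟩
      (by rw [Real.dist_eq]; exact hnear.trans_le (min_le_left _ _))
    rw [Real.dist_eq] at h
    nlinarith [sq_nonneg (t - x), div_nonneg (mul_nonneg zero_le_two hM0) (sq_nonneg δ')]
  · have hsq : δ' ^ 2 ≤ (t - x) ^ 2 := by
      rw [← sq_abs (t - x)]
      exact pow_le_pow_left₀ hδ'.le hfar 2
    calc |f t - f x| ≤ |f t| + |f x| := abs_sub _ _
      _ ≤ 2 * M / δ' ^ 2 * δ' ^ 2 := by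
        rw [div_mul_cancel₀ _ (by positivity)]
        linarith [hM t ht, hM x hx.1]
      _ ≤ ε + 2 * M / δ' ^ 2 * (t - x) ^ 2 := by
        nlinarith [div_nonneg (mul_nonneg zero_le_two hM0) (sq_nonneg δ')]

lemma abs_sub_mul_one_add_le {a b K C x : ℝ} (hab : 2 * a - b = 1) (hK : |a| ≤ K) (hx : 0 ≤ x)
    (hxC : x ≤ C) : |a - b * (1 + x)| ≤ 1 + C + K * (1 + 2 * C) := by
  rw [show a - b * (1 + x) = (1 + x) - a * (1 + 2 * x) by linear_combination (1 + x) * hab]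
  calc |(1 + x) - a * (1 + 2 * x)| ≤ |1 + x| + |a| * |1 + 2 * x| := by
        rw [← abs_mul]; exact abs_sub _ _
    _ ≤ 1 + C + K * (1 + 2 * C) := by
      rw [abs_of_nonneg (by linarith : (0 : ℝ) ≤ 1 + x),
        abs_of_nonneg (by linarith : (0 : ℝ) ≤ 1 + 2 * x)]
      nlinarith [mul_le_mul hK (by linarith : 1 + 2 * x ≤ 1 + 2 * C) (by linarith)
        ((abs_nonneg a).trans hK)]

lemma V1SecondMoment_le {a0 a1 : ℕ → ℝ} {n : ℕ} (hn : 4 ≤ n) {x C B : ℝ} (hx : 0 ≤ x)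
    (hxC : x ≤ C) (hB : |a0 n - a1 n * (1 + x)| ≤ B) :
    V1SecondMoment a0 a1 n x ≤ (11 * C ^ 2 + (9 + 4 * B) * C + 2 * B + 1) / ((n : ℝ) - 3) := by
  have hn4 : (4 : ℝ) ≤ n := by exact_mod_cast hn
  set β := a0 n - a1 n * (1 + x)
  have hβ := abs_le.1 hB
  have hB0 : 0 ≤ B := (abs_nonneg _).trans hB
  have hnum : (2 * n + 14) * x ^ 2 + (2 * n + 10 + 8 * β) * x + 4 * β + 2
      ≤ ((n : ℝ) - 2) * (11 * C ^ 2 + (9 + 4 * B) * C + 2 * B + 1) := by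
    have hx2 : x ^ 2 ≤ C ^ 2 := pow_le_pow_left₀ hx hxC 2
    nlinarith [mul_le_mul_of_nonneg_left hx2 (by linarith : (0 : ℝ) ≤ n - 4),
      mul_le_mul_of_nonneg_left hxC (by linarith : (0 : ℝ) ≤ n - 4),
      mul_le_mul_of_nonneg_left hxC (mul_nonneg hB0 (by linarith : (0 : ℝ) ≤ n - 4)),
      mul_le_mul_of_nonneg_left hβ.2 hx, mul_nonneg hB0 hx, mul_nonneg hB0 (sq_nonneg x)]
  rw [V1SecondMoment, div_le_div_iff₀ (by nlinarith) (by linarith)]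
  nlinarith [mul_le_mul_of_nonneg_right hnum (by linarith : (0 : ℝ) ≤ n - 3)]

theorem V1_uniform_convergence_positive_general (f : ℝ → ℝ)
    (hf_cont : ContinuousOn f (Set.Ici 0))
    (hf_bdd : ∃ M : ℝ, ∀ t ∈ Set.Ici (0 : ℝ), |f t| ≤ M)
    (a0 a1 : ℕ → ℝ)
    (ha0 : ∃ l : ℝ, Tendsto a0 atTop (𝓝 l))
    (hrel : ∀ n : ℕ, 2 * a0 n - a1 n = 1)
    (hpos : ∀ (n k : ℕ) (y : ℝ), 0 ≤ y → 0 ≤ p1 a0 a1 n k y)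
    (A : Set ℝ) (hA : A ⊆ Set.Ici 0) (hA_cpt : IsCompact A) :
    TendstoUniformlyOn (fun (n : ℕ) (y : ℝ) => V1 a0 a1 n f y) f atTop A := by
  obtain ⟨M, hM⟩ := hf_bdd
  obtain ⟨C, hC⟩ := hA_cpt.bddAbove
  obtain ⟨K, hK⟩ : ∃ K, ∀ n, |a0 n| ≤ K := by
    obtain ⟨l, hl⟩ := ha0
    obtain ⟨K, hK⟩ := hl.abs.bddAbove_range
    exact ⟨K, fun n => hK ⟨n, rfl⟩⟩
  set R := 11 * C ^ 2 + (9 + 4 * (1 + C + K * (1 + 2 * C))) * C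
    + 2 * (1 + C + K * (1 + 2 * C)) + 1
  rw [Metric.tendstoUniformlyOn_iff]
  intro ε hε
  obtain ⟨c, hc0, hc⟩ := exists_abs_sub_le_add_mul_sq hf_cont hM C (half_pos hε)
  have hlim : Tendsto (fun n : ℕ => c * (R / ((n : ℝ) - 3))) atTop (𝓝 0) := by
    simpa [sub_eq_add_neg] using (tendsto_const_nhds (x := R)).div_atTop
      (tendsto_atTop_add_const_right _ (-3) tendsto_natCast_atTop_atTop) |>.const_mul c
  filter_upwards [hlim.eventually_lt_const (half_pos hε), eventually_ge_atTop 4]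
    with n hn hn4 x hx
  have hV := abs_V1_sub_le hn4 (hA hx) (hrel n) (fun k => hpos n k x (hA hx))
    (hf_cont.mono Ioi_subset_Ici_self |>.aestronglyMeasurable measurableSet_Ioi)
    (fun t ht => hc x ⟨hA hx, hC hx⟩ t (Ioi_subset_Ici_self ht))
  have hE := V1SecondMoment_le hn4 (hA hx) (hC hx)
    (abs_sub_mul_one_add_le (hrel n) (hK n) (hA hx) (hC hx))
  rw [Real.dist_eq, abs_sub_comm]
  linarith [mul_le_mul_of_nonneg_left hE hc0]

theorem V1_uniform_convergence_positive (f : ℝ → ℝ)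
    (hf_cont : ContinuousOn f (Set.Ici 0))
    (hf_bdd : ∃ M : ℝ, ∀ t ∈ Set.Ici (0 : ℝ), |f t| ≤ M)
    (a0 a1 : ℕ → ℝ)
    (ha0 : ∃ l : ℝ, Tendsto a0 atTop (𝓝 l)) (ha1 : ∃ m : ℝ, Tendsto a1 atTop (𝓝 m))
    (hrel : ∀ n : ℕ, 2 * a0 n - a1 n = 1)
    (hpos : ∀ (n k : ℕ) (y : ℝ), 0 ≤ y → 0 ≤ p1 a0 a1 n k y)
    (A : Set ℝ) (hA : A ⊆ Set.Ici 0) (hA_cpt : IsCompact A) :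
    TendstoUniformlyOn (fun (n : ℕ) (y : ℝ) => V1 a0 a1 n f y) f atTop A :=
  V1_uniform_convergence_positive_general f hf_cont hf_bdd a0 a1 ha0 hrel hpos A hA hA_cpt
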